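/- arXiv:1706.08916 — 4 statements merged into one kernel-verified Lean document; each statement's English description precedes it below -/
import Mathlib

section
/- Let R, r > 0, b ∈ ℂ, and let g be a function from the closed polydisc {|z| ≤ R} × {|t − b| ≤ r} to ℂ that is analytic on the open polydisc {|z| < R} × {|t − b| < r}, continuous on the closed polydisc, satisfies g(0, b) = 0, and is bounded by M > 0 on the closed polydisc. Then for all (z, t) in the closed polydisc, |g(z, t)| ≤ M · max(|z|/R, |t − b|/r). -/
/-!
Rescaling each variable separately turns the polydisc `{|z - a| < R} × {|t - b| < r}` into the
unit ball of `ℂ × ℂ`, whose norm is the maximum of the norms of the coordinates. The Schwarz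
lemma for holomorphic maps on a ball of a normed space then bounds `|g(z, t)|` by `M` times the
sup-norm of the rescaled point, which is `max (|z| / R) (|t - b| / r)`. On the boundary of the
polydisc that maximum is `1` and the bound `|g| ≤ M` suffices.
-/

open Complex Metric Set

theorem mapsTo_unitBall_polydisc {a b : ℂ} {R r : ℝ} (hR : 0 < R) (hr : 0 < r) :
    MapsTo (fun w : ℂ × ℂ => (a + R * w.1, b + r * w.2)) (ball 0 1) (ball a R ×ˢ ball b r) := by
  intro w hw
  rw [mem_ball_zero_iff, Prod.norm_def, max_lt_iff] at hw
  simp only [mem_prod, mem_ball, dist_eq_norm, add_sub_cancel_left, norm_mul, norm_real,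
    Real.norm_of_nonneg hR.le, Real.norm_of_nonneg hr.le]
  exact ⟨mul_lt_of_lt_one_right hR hw.1, mul_lt_of_lt_one_right hr hw.2⟩

theorem dist_le_mul_max_of_mapsTo_polydisc {F : Type*} [NormedAddCommGroup F] [NormedSpace ℂ F]
    {f : ℂ × ℂ → F} {a b z t : ℂ} {R r M : ℝ} (hR : 0 < R) (hr : 0 < r)
    (hd : DifferentiableOn ℂ f (ball a R ×ˢ ball b r))
    (h_maps : MapsTo f (ball a R ×ˢ ball b r) (closedBall (f (a, b)) M))
    (hz : z ∈ ball a R) (ht : t ∈ ball b r) :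
    dist (f (z, t)) (f (a, b)) ≤ M * max (dist z a / R) (dist t b / r) := by
  set φ : ℂ × ℂ → ℂ × ℂ := fun w => (a + R * w.1, b + r * w.2)
  have hφ : MapsTo φ (ball 0 1) (ball a R ×ˢ ball b r) := mapsTo_unitBall_polydisc hR hr
  have hφ0 : φ 0 = (a, b) := by simp [φ]
  set w : ℂ × ℂ := ((z - a) / R, (t - b) / r)
  have hφw : φ w = (z, t) := by
    have hR' : (R : ℂ) ≠ 0 := ofReal_ne_zero.mpr hR.ne'
    have hr' : (r : ℂ) ≠ 0 := ofReal_ne_zero.mpr hr.ne'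
    simp only [φ, w, Prod.mk.injEq]
    constructor <;> field_simp <;> ring
  have hw_norm : ‖w‖ = max (dist z a / R) (dist t b / r) := by
    simp [w, Prod.norm_def, dist_eq_norm, abs_of_pos hR, abs_of_pos hr]
  have hw : w ∈ ball 0 1 := by
    rw [mem_ball_zero_iff, hw_norm, max_lt_iff, div_lt_one hR, div_lt_one hr]
    exact ⟨hz, ht⟩
  have h_maps' : MapsTo (f ∘ φ) (ball 0 1) (closedBall ((f ∘ φ) 0) M) := by
    rw [Function.comp_apply, hφ0]
    exact h_maps.comp hφ
  simpa [hφ0, hφw, hw_norm] using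
    Complex.dist_le_div_mul_dist_of_mapsTo_ball (hd.comp (by fun_prop) hφ) h_maps' hw

theorem schwarz_two_variables_general
    (R r M : ℝ) (hR : 0 < R) (hr : 0 < r) (hM : 0 < M) (b : ℂ)
    (g : ℂ × ℂ → ℂ)
    (hg_anal : DifferentiableOn ℂ g (ball (0 : ℂ) R ×ˢ ball b r))
    (hg0 : g (0, b) = 0)
    (hg_bd : ∀ p ∈ closedBall (0 : ℂ) R ×ˢ closedBall b r, ‖g p‖ ≤ M) :
    ∀ z t : ℂ, ‖z‖ ≤ R → ‖t - b‖ ≤ r →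
      ‖g (z, t)‖ ≤ M * max (‖z‖ / R) (‖t - b‖ / r) := by
  intro z t hz ht
  by_cases h_interior : ‖z‖ < R ∧ ‖t - b‖ < r
  · have h_maps : MapsTo g (ball 0 R ×ˢ ball b r) (closedBall (g (0, b)) M) := fun p hp => by
      rw [hg0, mem_closedBall_zero_iff]
      exact hg_bd p (prod_mono ball_subset_closedBall ball_subset_closedBall hp)
    have ht' : t ∈ ball b r := by
      rw [mem_ball, dist_eq_norm]
      exact h_interior.2
    simpa [hg0, dist_eq_norm] using dist_le_mul_max_of_mapsTo_polydisc hR hr hg_anal h_maps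
      (mem_ball_zero_iff.mpr h_interior.1) ht'
  · have h_one_le : 1 ≤ max (‖z‖ / R) (‖t - b‖ / r) := by
      rw [not_and_or, not_lt, not_lt] at h_interior
      rwa [le_max_iff, one_le_div hR, one_le_div hr]
    have h_mem : (z, t) ∈ closedBall (0 : ℂ) R ×ˢ closedBall b r := by
      rw [mem_prod, mem_closedBall_zero_iff, mem_closedBall, dist_eq_norm]
      exact ⟨hz, ht⟩
    calc ‖g (z, t)‖ ≤ M := hg_bd (z, t) h_mem
      _ ≤ M * max (‖z‖ / R) (‖t - b‖ / r) := le_mul_of_one_le_right hM.le h_one_le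

theorem schwarz_two_variables
    (R r M : ℝ) (hR : 0 < R) (hr : 0 < r) (hM : 0 < M) (b : ℂ)
    (g : ℂ × ℂ → ℂ)
    (hg_anal : DifferentiableOn ℂ g (ball (0 : ℂ) R ×ˢ ball b r))
    (hg_cont : ContinuousOn g (closedBall (0 : ℂ) R ×ˢ closedBall b r))
    (hg0 : g (0, b) = 0)
    (hg_bd : ∀ p ∈ closedBall (0 : ℂ) R ×ˢ closedBall b r, ‖g p‖ ≤ M) :
    ∀ z t : ℂ, ‖z‖ ≤ R → ‖t - b‖ ≤ r →
      ‖g (z, t)‖ ≤ M * max (‖z‖ / R) (‖t - b‖ / r) :=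
  schwarz_two_variables_general R r M hR hr hM b g hg_anal hg0 hg_bd
end

section
/- Noshiro–Warschawski theorem: Let D ⊆ ℂ be a convex open set and f : D → ℂ holomorphic. If there exists a real β such that Re(e^{iβ} f'(z)) > 0 for all z ∈ D, then f is injective on D. -/
/-!
Rotating by `e^{iβ}` reduces to `0 < Re f'`. For `z₁ ≠ z₂` in `D`, the real function
`t ↦ Re (f (z₁ + t (z₂ - z₁)) / (z₂ - z₁))` has derivative `Re f'` along the segment, hence is
strictly increasing on `[0, 1]`, so `Re ((f z₂ - f z₁) / (z₂ - z₁)) > 0` and `f z₁ ≠ f z₂`.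
-/

open Complex Set

lemma hasDerivAt_re_comp_add_smul_div {f : ℂ → ℂ} {z w : ℂ} {t : ℝ}
    (hf : DifferentiableAt ℂ f (z + t • w)) (hw : w ≠ 0) :
    HasDerivAt (fun s : ℝ => (f (z + s • w) / w).re) (deriv f (z + t • w)).re t := by
  have hline : HasDerivAt (fun s : ℝ => z + s • w) w t := by
    simpa using ((hasDerivAt_id t).smul_const w).const_add z
  have := (hf.hasDerivAt.comp t hline).div_const w
  rw [mul_div_cancel_right₀ _ hw] at this
  exact reCLM.hasFDerivAt.comp_hasDerivAt t this

theorem Convex.re_sub_div_sub_pos_of_re_deriv_pos {D : Set ℂ} (hD_open : IsOpen D)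
    (hD_convex : Convex ℝ D) {f : ℂ → ℂ} (hf : DifferentiableOn ℂ f D)
    (hpos : ∀ z ∈ D, 0 < (deriv f z).re) {z₁ z₂ : ℂ} (h₁ : z₁ ∈ D) (h₂ : z₂ ∈ D)
    (hne : z₁ ≠ z₂) : 0 < ((f z₂ - f z₁) / (z₂ - z₁)).re := by
  set w := z₂ - z₁
  have hw : w ≠ 0 := sub_ne_zero.mpr hne.symm
  have hmem : ∀ t ∈ Icc (0 : ℝ) 1, z₁ + t • w ∈ D := fun t ht =>
    hD_convex.add_smul_sub_mem h₁ h₂ ht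
  have hderiv : ∀ t ∈ Icc (0 : ℝ) 1,
      HasDerivAt (fun s : ℝ => (f (z₁ + s • w) / w).re) (deriv f (z₁ + t • w)).re t :=
    fun t ht => hasDerivAt_re_comp_add_smul_div
      (hf.differentiableAt (hD_open.mem_nhds (hmem t ht))) hw
  have hmono : StrictMonoOn (fun s : ℝ => (f (z₁ + s • w) / w).re) (Icc 0 1) :=
    strictMonoOn_of_hasDerivWithinAt_pos (convex_Icc 0 1)
      (fun t ht => (hderiv t ht).continuousAt.continuousWithinAt)
      (fun t ht => (hderiv t (interior_subset ht)).hasDerivWithinAt)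
      (fun t ht => hpos _ (hmem t (interior_subset ht)))
  have h01 := hmono (left_mem_Icc.mpr zero_le_one) (right_mem_Icc.mpr zero_le_one) zero_lt_one
  simp only [zero_smul, add_zero, one_smul, w, add_sub_cancel] at h01
  rwa [sub_div, sub_re, sub_pos]

theorem Convex.injOn_of_re_deriv_pos {D : Set ℂ} (hD_open : IsOpen D)
    (hD_convex : Convex ℝ D) {f : ℂ → ℂ} (hf : DifferentiableOn ℂ f D)
    (hpos : ∀ z ∈ D, 0 < (deriv f z).re) : InjOn f D := by
  intro z₁ h₁ z₂ h₂ hfe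
  by_contra hne
  have := hD_convex.re_sub_div_sub_pos_of_re_deriv_pos hD_open hf hpos h₁ h₂ hne
  simp [hfe] at this

theorem noshiro_warschawski
    (D : Set ℂ) (hD_open : IsOpen D) (hD_convex : Convex ℝ D)
    (f : ℂ → ℂ) (hf : DifferentiableOn ℂ f D)
    (β : ℝ) (hβ : ∀ z ∈ D, 0 < (Complex.exp (β * Complex.I) * deriv f z).re) :
    Set.InjOn f D := by
  set c := Complex.exp (β * Complex.I)
  have hderiv : ∀ z ∈ D, deriv (fun z => c * f z) z = c * deriv f z := fun z hz =>
    deriv_const_mul c (hf.differentiableAt (hD_open.mem_nhds hz))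
  have hinj : InjOn (fun z => c * f z) D :=
    hD_convex.injOn_of_re_deriv_pos hD_open (hf.const_mul c)
      (fun z hz => hderiv z hz ▸ hβ z hz)
  exact fun z₁ h₁ z₂ h₂ hfe => hinj h₁ h₂ (by simp only [hfe])
end

section
/- Let 0 < q < 1 and let h be holomorphic on the open unit disc and continuous on the closed unit disc with h(0) = 0. Define u(z) = (1/Γ(q)) ∫₀ᶻ ζ^{−q} h(ζ) (z−ζ)^{q−1} dζ (integration along the segment from 0 to z). Then for all z in the closed unit disc, |u(z) − z| ≤ sup_{|w| ≤ 1} |Γ(1−q)·h(w) − w/(1−q)|. -/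
/-!
The weight `w(t) = t^{-q}(1-t)^{q-1}` is nonnegative on `[0,1]`, and the Beta integrals give
`∫₀¹ w = Γ(1-q)Γ(q)` and `∫₀¹ w(t) t dt = (1-q)Γ(1-q)Γ(q)`. The second one says that `u` maps
`ζ ↦ ζ / ((1-q)Γ(1-q))` to the identity, so with `g(w) = Γ(1-q)h(w) - w/(1-q)` we get
`Γ(1-q)Γ(q) (u(z) - z) = ∫₀¹ w(t) g(zt) dt`: `u(z) - z` is a weighted average of `g` over the
segment `[0, z]`, and is therefore bounded by `sup |g|`.
-/

open Complex Metric Real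

open MeasureTheory Set

namespace Real

variable {a b : ℝ}

lemma ofReal_rpow_mul_one_sub_rpow {t : ℝ} (ht : t ∈ Icc (0 : ℝ) 1) :
    ((t ^ (a - 1) * (1 - t) ^ (b - 1) : ℝ) : ℂ) =
      (t : ℂ) ^ ((a : ℂ) - 1) * (1 - (t : ℂ)) ^ ((b : ℂ) - 1) := by
  rw [ofReal_mul, ofReal_cpow ht.1, ofReal_cpow (sub_nonneg.2 ht.2)]
  push_cast
  rfl

lemma intervalIntegrable_rpow_mul_one_sub_rpow (ha : 0 < a) (hb : 0 < b) :
    IntervalIntegrable (fun t : ℝ => t ^ (a - 1) * (1 - t) ^ (b - 1)) volume 0 1 := by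
  have hC : IntervalIntegrable (fun t : ℝ => ((t ^ (a - 1) * (1 - t) ^ (b - 1) : ℝ) : ℂ))
      volume 0 1 := by
    refine (betaIntegral_convergent (u := a) (v := b) (by simpa) (by simpa)).congr ?_
    rw [uIoc_of_le zero_le_one]
    exact fun t ht => (ofReal_rpow_mul_one_sub_rpow (Ioc_subset_Icc_self ht)).symm
  exact ⟨hC.1.re, hC.2.re⟩

lemma integral_rpow_mul_one_sub_rpow (ha : 0 < a) (hb : 0 < b) :
    ∫ t in (0 : ℝ)..1, t ^ (a - 1) * (1 - t) ^ (b - 1) = Gamma a * Gamma b / Gamma (a + b) := by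
  rw [eq_div_iff (Gamma_pos_of_pos (add_pos ha hb)).ne']
  apply ofReal_injective
  have hB := Complex.Gamma_mul_Gamma_eq_betaIntegral (s := a) (t := b) (by simpa) (by simpa)
  rw [← ofReal_add, Complex.Gamma_ofReal, Complex.Gamma_ofReal, Complex.Gamma_ofReal] at hB
  rw [ofReal_mul, ofReal_mul, hB, mul_comm, ← intervalIntegral.integral_ofReal, betaIntegral]
  congr 1
  refine intervalIntegral.integral_congr fun t ht => ?_
  rw [uIcc_of_le zero_le_one] at ht
  exact ofReal_rpow_mul_one_sub_rpow ht

end Real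

noncomputable def betaWeight (q t : ℝ) : ℝ := t ^ (-q) * (1 - t) ^ (q - 1)

section betaWeight

variable {q : ℝ}

lemma betaWeight_nonneg {t : ℝ} (ht : t ∈ Icc (0 : ℝ) 1) : 0 ≤ betaWeight q t :=
  mul_nonneg (rpow_nonneg ht.1 _) (rpow_nonneg (sub_nonneg.2 ht.2) _)

lemma intervalIntegrable_betaWeight (hq0 : 0 < q) (hq1 : q < 1) :
    IntervalIntegrable (betaWeight q) volume 0 1 := by
  have hβ := intervalIntegrable_rpow_mul_one_sub_rpow (sub_pos.2 hq1) hq0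
  rwa [sub_sub_cancel_left] at hβ

lemma integral_betaWeight (hq0 : 0 < q) (hq1 : q < 1) :
    ∫ t in (0 : ℝ)..1, betaWeight q t = Real.Gamma (1 - q) * Real.Gamma q := by
  have hβ := integral_rpow_mul_one_sub_rpow (sub_pos.2 hq1) hq0
  rwa [sub_sub_cancel_left, sub_add_cancel, Real.Gamma_one, div_one] at hβ

lemma integral_betaWeight_mul_self (hq0 : 0 < q) (hq1 : q < 1) :
    ∫ t in (0 : ℝ)..1, betaWeight q t * t = (1 - q) * (Real.Gamma (1 - q) * Real.Gamma q) := by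
  have hβ := integral_rpow_mul_one_sub_rpow (a := (1 - q) + 1) (by linarith) hq0
  rw [Real.Gamma_add_one (sub_pos.2 hq1).ne', show (1 - q) + 1 + q = 2 by ring, Real.Gamma_two,
    div_one, add_sub_cancel_right] at hβ
  rw [← mul_assoc, ← hβ]
  refine intervalIntegral.integral_congr fun t ht => ?_
  rw [uIcc_of_le zero_le_one] at ht
  simp only [betaWeight]
  rw [show 1 - q = -q + 1 by ring, rpow_add_one' ht.1 (by linarith : (0 : ℝ) < -q + 1).ne']
  ring

end betaWeight

lemma norm_integral_smul_le_integral_mul {E : Type*} [NormedAddCommGroup E] [NormedSpace ℝ E]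
    {w : ℝ → ℝ} {f : ℝ → E} {a b M : ℝ} (hab : a ≤ b) (hw : IntervalIntegrable w volume a b)
    (hw0 : ∀ t ∈ Icc a b, 0 ≤ w t) (hf : ∀ t ∈ Icc a b, ‖f t‖ ≤ M) :
    ‖∫ t in a..b, w t • f t‖ ≤ (∫ t in a..b, w t) * M := by
  rw [← intervalIntegral.integral_mul_const]
  refine intervalIntegral.norm_integral_le_of_norm_le hab (.of_forall fun t ht => ?_)
    (hw.mul_const M)
  have ht' := Ioc_subset_Icc_self ht
  rw [norm_smul, norm_of_nonneg (hw0 t ht')]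
  exact mul_le_mul_of_nonneg_left (hf t ht') (hw0 t ht')

lemma mul_ofReal_mem_closedBall {z : ℂ} (hz : ‖z‖ ≤ 1) {t : ℝ} (ht : t ∈ Icc (0 : ℝ) 1) :
    z * t ∈ closedBall (0 : ℂ) 1 := by
  rw [mem_closedBall_zero_iff, norm_mul, norm_real, norm_of_nonneg ht.1]
  exact mul_le_one₀ hz ht.1 ht.2

lemma integral_betaWeight_mul_sub_eq {q : ℝ} (hq0 : 0 < q) (hq1 : q < 1) {h : ℂ → ℂ}
    (hh : ContinuousOn h (closedBall (0 : ℂ) 1)) {z : ℂ} (hz : ‖z‖ ≤ 1) :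
    ∫ t in (0 : ℝ)..1,
        (betaWeight q t : ℂ) * (Real.Gamma (1 - q) * h (z * t) - z * t / (1 - q)) =
      Real.Gamma (1 - q) *
        ((∫ t in (0 : ℝ)..1, (betaWeight q t : ℂ) * h (z * t)) - Real.Gamma q * z) := by
  have hw := intervalIntegrable_betaWeight hq0 hq1
  have hwC : IntervalIntegrable (fun t => (betaWeight q t : ℂ)) volume 0 1 :=
    ⟨hw.1.ofReal, hw.2.ofReal⟩
  have hwt : IntervalIntegrable (fun t => betaWeight q t * t) volume 0 1 :=
    hw.mul_continuousOn continuousOn_id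
  have hwtC : IntervalIntegrable (fun t => ((betaWeight q t * t : ℝ) : ℂ)) volume 0 1 :=
    ⟨hwt.1.ofReal, hwt.2.ofReal⟩
  have hcont : ContinuousOn (fun t : ℝ => h (z * t)) (uIcc 0 1) := by
    rw [uIcc_of_le zero_le_one]
    exact hh.comp (by fun_prop) fun t ht => mul_ofReal_mem_closedBall hz ht
  have hsplit : ∀ t : ℝ,
      (betaWeight q t : ℂ) * (Real.Gamma (1 - q) * h (z * t) - z * t / (1 - q)) =
        Real.Gamma (1 - q) * ((betaWeight q t : ℂ) * h (z * t)) -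
          z / (1 - q) * ((betaWeight q t * t : ℝ) : ℂ) := by
    intro t
    push_cast
    ring
  have hq : (1 - q : ℂ) ≠ 0 := by exact_mod_cast (sub_pos.2 hq1).ne'
  simp_rw [hsplit]
  rw [intervalIntegral.integral_sub ((hwC.mul_continuousOn hcont).const_mul _)
      (hwtC.const_mul _),
    intervalIntegral.integral_const_mul, intervalIntegral.integral_const_mul,
    intervalIntegral.integral_ofReal, integral_betaWeight_mul_self hq0 hq1]
  push_cast
  field_simp

theorem distance_to_identity_estimate_general
    (q : ℝ) (hq0 : 0 < q) (hq1 : q < 1)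
    (h : ℂ → ℂ)
    (hh_cont : ContinuousOn h (closedBall (0 : ℂ) 1))
    (u : ℂ → ℂ)
    (hu : ∀ z : ℂ, u z =
      (1 / (Real.Gamma q : ℂ)) *
        ∫ t in (0:ℝ)..1, (((t ^ (-q) * (1 - t) ^ (q - 1) : ℝ)) : ℂ) * h (z * t)) :
    ∀ z : ℂ, ‖z‖ ≤ 1 →
      ‖u z - z‖ ≤
        sSup ((fun w : ℂ => ‖(Real.Gamma (1 - q) : ℂ) * h w - w / (1 - q)‖) ''
          closedBall (0 : ℂ) 1) := by
  intro z hz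
  have hΓ1q : 0 < Real.Gamma (1 - q) := Gamma_pos_of_pos (sub_pos.2 hq1)
  have hΓq : 0 < Real.Gamma q := Gamma_pos_of_pos hq0
  have hbound : ∀ t ∈ Icc (0 : ℝ) 1,
      ‖(Real.Gamma (1 - q) : ℂ) * h (z * t) - z * t / (1 - q)‖ ≤
        sSup ((fun w : ℂ => ‖(Real.Gamma (1 - q) : ℂ) * h w - w / (1 - q)‖) ''
          closedBall (0 : ℂ) 1) := fun t ht =>
    le_csSup ((isCompact_closedBall 0 1).bddAbove_image (by fun_prop))
      (mem_image_of_mem _ (mul_ofReal_mem_closedBall hz ht))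
  have havg := norm_integral_smul_le_integral_mul zero_le_one
    (intervalIntegrable_betaWeight hq0 hq1) (fun t ht => betaWeight_nonneg ht) hbound
  simp only [real_smul] at havg
  rw [integral_betaWeight_mul_sub_eq hq0 hq1 hh_cont hz, integral_betaWeight hq0 hq1,
    norm_mul, norm_real, norm_of_nonneg hΓ1q.le, mul_assoc] at havg
  have huz : u z - z =
      ((∫ t in (0 : ℝ)..1, (betaWeight q t : ℂ) * h (z * t)) - Real.Gamma q * z) /
        Real.Gamma q := by
    have hΓC : (Real.Gamma q : ℂ) ≠ 0 := ofReal_ne_zero.2 hΓq.ne'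
    rw [hu z]
    simp only [betaWeight]
    field_simp
  rw [huz, norm_div, norm_real, norm_of_nonneg hΓq.le, div_le_iff₀' hΓq]
  exact le_of_mul_le_mul_left havg hΓ1q

/-- After the change of variable ζ = zt, the segment integral
`u(z) = (1/Γ(q)) ∫₀ᶻ ζ^{-q} h(ζ) (z-ζ)^{q-1} dζ` becomes
`u(z) = (1/Γ(q)) ∫₀¹ t^{-q}(1-t)^{q-1} h(zt) dt`. -/
theorem distance_to_identity_estimate
    (q : ℝ) (hq0 : 0 < q) (hq1 : q < 1)
    (h : ℂ → ℂ)
    (hh_anal : DifferentiableOn ℂ h (ball (0 : ℂ) 1))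
    (hh_cont : ContinuousOn h (closedBall (0 : ℂ) 1))
    (hh0 : h 0 = 0)
    (u : ℂ → ℂ)
    (hu : ∀ z : ℂ, u z =
      (1 / (Real.Gamma q : ℂ)) *
        ∫ t in (0:ℝ)..1, (((t ^ (-q) * (1 - t) ^ (q - 1) : ℝ)) : ℂ) * h (z * t)) :
    ∀ z : ℂ, ‖z‖ ≤ 1 →
      ‖u z - z‖ ≤
        sSup ((fun w : ℂ => ‖(Real.Gamma (1 - q) : ℂ) * h w - w / (1 - q)‖) ''
          closedBall (0 : ℂ) 1) :=
  distance_to_identity_estimate_general q hq0 hq1 h hh_cont u hu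
end

section
/- Let u be holomorphic on the open unit disc with u(0) = 0, u'(0) = 1, and |u'(z) − 1| ≤ M for all z in the open unit disc, where 0 < M ≤ √20/5 = 2/√5. Then u is starlike with respect to the origin on the open unit disc, i.e., Re(z u'(z)/u(z)) > 0 for all z ≠ 0 in the open unit disc. -/
/-!
Injectivity: `u - id` is `M`-Lipschitz on the convex disc and `M < 1`.

Starlikeness: the Schwarz lemma applied to `u' - 1` gives `|u'(z) - 1| ≤ M|z|`, and integrating
along the radius gives `|u(z)/z - 1| ≤ M|z|/2`. With `s = M|z|/2` we have `5s² < 1`, and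
`z u'(z)/u(z) = p/q` with `|p - 1| ≤ 2s`, `|q - 1| ≤ s`. Then `Re(p q̄) ≥ Re q - 2s|q| > 0`,
since the disc `|q - 1| ≤ s` lies in the sector `2s|q| < Re q` precisely when `5s² < 1`.
-/

open Complex Metric
open scoped ComplexConjugate

theorem two_mul_mul_norm_lt_re {q : ℂ} {s : ℝ} (hq : ‖q - 1‖ ≤ s) (hs : 5 * s ^ 2 < 1) :
    2 * s * ‖q‖ < q.re := by
  have hs0 : 0 ≤ s := (norm_nonneg _).trans hq
  have hnormSq : ‖q‖ ^ 2 = q.re ^ 2 + q.im ^ 2 := by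
    rw [Complex.sq_norm, Complex.normSq_apply]; ring
  have hdisc : (q.re - 1) ^ 2 + q.im ^ 2 ≤ s ^ 2 := by
    have h := pow_le_pow_left₀ (norm_nonneg _) hq 2
    rwa [Complex.sq_norm, Complex.normSq_apply, sub_re, sub_im, one_re, one_im, sub_zero,
      ← sq, ← sq] at h
  have hre : 0 < q.re := by nlinarith
  -- `q.re² - 4 s² ‖q‖² ≥ (q.re - 4 s²)² + 4 s² (1 - 5 s²)` on the disc `‖q - 1‖ ≤ s`
  have hsq : (2 * s * ‖q‖) ^ 2 < q.re ^ 2 := by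
    rcases hs0.eq_or_lt with rfl | hs_pos
    · simpa using pow_pos hre 2
    · nlinarith [sq_nonneg (q.re - 4 * s ^ 2), mul_pos (pow_pos hs_pos 2) (sub_pos.2 hs)]
  exact abs_lt_of_sq_lt_sq' hsq hre.le |>.2

theorem re_div_pos_of_norm_sub_one_le {p q : ℂ} {s : ℝ} (hs : 5 * s ^ 2 < 1)
    (hp : ‖p - 1‖ ≤ 2 * s) (hq : ‖q - 1‖ ≤ s) : 0 < (p / q).re := by
  have hkey := two_mul_mul_norm_lt_re hq hs
  have hq0 : q ≠ 0 := by
    rintro rfl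
    simp at hkey
  have hnum : 0 < (p * conj q).re := by
    have hsplit : p * conj q = conj q + (p - 1) * conj q := by ring
    have hlow : -(‖p - 1‖ * ‖q‖) ≤ ((p - 1) * conj q).re := by
      simpa using neg_le_of_abs_le (abs_re_le_norm ((p - 1) * conj q))
    have hup : ‖p - 1‖ * ‖q‖ ≤ 2 * s * ‖q‖ := mul_le_mul_of_nonneg_right hp (norm_nonneg q)
    rw [hsplit, add_re, conj_re]
    linarith
  have hre_div : (p / q).re = (p * conj q).re / normSq q := by
    rw [div_re, mul_re, conj_re, conj_im]; ring
  rw [hre_div]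
  exact div_pos hnum (normSq_pos.2 hq0)

theorem injOn_of_norm_deriv_sub_one_le {𝕜 : Type*} [RCLike 𝕜] {f : 𝕜 → 𝕜} {s : Set 𝕜} {M : ℝ}
    (hs : Convex ℝ s) (hf : ∀ x ∈ s, DifferentiableAt 𝕜 f x) (hM : M < 1)
    (hbd : ∀ x ∈ s, ‖deriv f x - 1‖ ≤ M) : Set.InjOn f s := by
  intro x hx y hy hxy
  have hlip : ‖(f y - y) - (f x - x)‖ ≤ M * ‖y - x‖ :=
    hs.norm_image_sub_le_of_norm_deriv_le (f := fun w => f w - w)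
      (fun w hw => (hf w hw).sub differentiableAt_fun_id)
      (fun w hw => by
        rw [deriv_fun_sub (hf w hw) differentiableAt_fun_id, deriv_id'']
        exact hbd w hw)
      hx hy
  rw [hxy, show f y - y - (f y - x) = -(y - x) by ring, norm_neg] at hlip
  by_contra hne
  have hpos : 0 < ‖y - x‖ := norm_pos_iff.2 (sub_ne_zero.2 (Ne.symm hne))
  nlinarith

theorem norm_le_of_norm_deriv_le_mul_norm {E : Type*} [NormedAddCommGroup E] [NormedSpace ℂ E]
    {f : ℂ → E} {R C : ℝ} (hf : DifferentiableOn ℂ f (ball 0 R)) (h0 : f 0 = 0)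
    (hC : ∀ w ∈ ball (0 : ℂ) R, ‖deriv f w‖ ≤ C * ‖w‖) {z : ℂ} (hz : z ∈ ball 0 R) :
    ‖f z‖ ≤ C / 2 * ‖z‖ ^ 2 := by
  have hnorm : ∀ t ∈ Set.Icc (0 : ℝ) 1, ‖(t : ℂ) * z‖ = t * ‖z‖ := fun t ht => by
    rw [norm_mul, norm_real, Real.norm_of_nonneg ht.1]
  have hmem : ∀ t ∈ Set.Icc (0 : ℝ) 1, (t : ℂ) * z ∈ ball (0 : ℂ) R := fun t ht => by
    rw [mem_ball_zero_iff, hnorm t ht]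
    exact lt_of_le_of_lt (mul_le_of_le_one_left (norm_nonneg z) ht.2) (mem_ball_zero_iff.1 hz)
  have hderiv : ∀ t ∈ Set.Icc (0 : ℝ) 1,
      HasDerivAt (fun t : ℝ => f ((t : ℂ) * z)) (z • deriv f ((t : ℂ) * z)) t := fun t ht => by
    have hline : HasDerivAt (fun t : ℝ => (t : ℂ) * z) z t := by
      simpa using ((hasDerivAt_id (t : ℂ)).mul_const z).comp_ofReal
    exact (hf.differentiableAt (isOpen_ball.mem_nhds (hmem t ht))).hasDerivAt.scomp t hline
  have hbound := image_norm_le_of_norm_deriv_right_le_deriv_boundary (a := 0) (b := 1)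
    (fun t ht => (hderiv t ht).continuousAt.continuousWithinAt)
    (fun t ht => (hderiv t (Set.Ico_subset_Icc_self ht)).hasDerivWithinAt)
    (B := fun t => C / 2 * ‖z‖ ^ 2 * t ^ 2) (B' := fun t => C * ‖z‖ ^ 2 * t)
    (by simp [h0])
    (fun t => ((hasDerivAt_pow 2 t).const_mul (C / 2 * ‖z‖ ^ 2)).congr_deriv (by norm_num; ring))
    (fun t ht => by
      have ht' := Set.Ico_subset_Icc_self ht
      rw [norm_smul]
      calc ‖z‖ * ‖deriv f ((t : ℂ) * z)‖ ≤ ‖z‖ * (C * (t * ‖z‖)) :=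
            mul_le_mul_of_nonneg_left (hnorm t ht' ▸ hC _ (hmem t ht')) (norm_nonneg z)
        _ = C * ‖z‖ ^ 2 * t := by ring)
    (Set.right_mem_Icc.2 zero_le_one)
  simpa using hbound

theorem norm_deriv_sub_one_le_mul_norm {u : ℂ → ℂ} {M : ℝ}
    (hu : DifferentiableOn ℂ u (ball 0 1)) (hu'0 : deriv u 0 = 1)
    (hbd : ∀ z ∈ ball (0 : ℂ) 1, ‖deriv u z - 1‖ ≤ M) {z : ℂ} (hz : z ∈ ball 0 1) :
    ‖deriv u z - 1‖ ≤ M * ‖z‖ := by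
  have hg : DifferentiableOn ℂ (fun w => deriv u w - 1) (ball 0 1) :=
    (hu.analyticOnNhd isOpen_ball).deriv.differentiableOn.sub_const 1
  have hmaps : Set.MapsTo (fun w => deriv u w - 1) (ball 0 1) (closedBall (deriv u 0 - 1) M) :=
    fun w hw => by simpa [hu'0] using hbd w hw
  simpa [hu'0] using Complex.dist_le_div_mul_dist_of_mapsTo_ball hg hmaps hz

theorem mocanu_starlike_general
    (u : ℂ → ℂ) (M : ℝ) (hM : M ≤ 2 / Real.sqrt 5)
    (hu_anal : DifferentiableOn ℂ u (ball (0 : ℂ) 1))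
    (hu0 : u 0 = 0) (hu'0 : deriv u 0 = 1)
    (hu_bd : ∀ z ∈ ball (0 : ℂ) 1, ‖deriv u z - 1‖ ≤ M) :
    Set.InjOn u (ball (0 : ℂ) 1) ∧
    ∀ z ∈ ball (0 : ℂ) 1, z ≠ 0 → 0 < (z * deriv u z / u z).re := by
  have hM0 : 0 ≤ M := by simpa [hu'0] using hu_bd 0 (mem_ball_self one_pos)
  have hM_sq : 5 * M ^ 2 ≤ 4 := by
    have h := (le_div_iff₀ (by positivity)).1 hM
    nlinarith [Real.sq_sqrt (show (0 : ℝ) ≤ 5 by norm_num), mul_nonneg hM0 (Real.sqrt_nonneg 5)]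
  have hdiff : ∀ z ∈ ball (0 : ℂ) 1, DifferentiableAt ℂ u z :=
    fun z hz => hu_anal.differentiableAt (isOpen_ball.mem_nhds hz)
  refine ⟨injOn_of_norm_deriv_sub_one_le (convex_ball 0 1) hdiff (by nlinarith) hu_bd,
    fun z hz hz0 => ?_⟩
  have hz1 : ‖z‖ < 1 := mem_ball_zero_iff.1 hz
  have hremainder : ‖u z - z‖ ≤ M / 2 * ‖z‖ ^ 2 :=
    norm_le_of_norm_deriv_le_mul_norm (f := fun w => u w - w) (hu_anal.sub differentiableOn_id)
      (by simp [hu0])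
      (fun w hw => by
        rw [deriv_fun_sub (hdiff w hw) differentiableAt_fun_id, deriv_id'']
        exact norm_deriv_sub_one_le_mul_norm hu_anal hu'0 hu_bd hw)
      hz
  have hquot : ‖u z / z - 1‖ ≤ M * ‖z‖ / 2 := by
    rw [div_sub_one hz0, norm_div, div_le_iff₀ (norm_pos_iff.2 hz0)]
    linarith
  rw [mul_comm, ← div_div_eq_mul_div]
  refine re_div_pos_of_norm_sub_one_le ?_ ?_ hquot
  · nlinarith [mul_le_mul_of_nonneg_right hM_sq (sq_nonneg ‖z‖), norm_nonneg z]
  · linarith [norm_deriv_sub_one_le_mul_norm hu_anal hu'0 hu_bd hz]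

/-- Mocanu's starlikeness criterion. -/
theorem mocanu_starlike
    (u : ℂ → ℂ) (M : ℝ) (hM0 : 0 < M) (hM : M ≤ 2 / Real.sqrt 5)
    (hu_anal : DifferentiableOn ℂ u (ball (0 : ℂ) 1))
    (hu0 : u 0 = 0) (hu'0 : deriv u 0 = 1)
    (hu_bd : ∀ z ∈ ball (0 : ℂ) 1, ‖deriv u z - 1‖ ≤ M) :
    Set.InjOn u (ball (0 : ℂ) 1) ∧
    ∀ z ∈ ball (0 : ℂ) 1, z ≠ 0 → 0 < (z * deriv u z / u z).re :=
  mocanu_starlike_general u M hM hu_anal hu0 hu'0 hu_bd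
end
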